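/- (Computation of the expectation of GNW) Suppose f : ℝ^d → ℝ is bounded measurable and E[ε_1] = 0. Then E[f̂(x)] = b_n(f,x)·(1 − (1 − c_n(x))^n). -/

import Mathlib

/-!
Put `W i = (X i, U i, ε i)`, `s = {(z, u, e) | u ≤ k_n(x, z)}` and `y (z, u, e) = f z + e`, so
that `f̂ = hitMean s y W` is the average of `y` over the sample points lying in `s`. Split the
sample space into the cells on which exactly the indices of `S` hit `s`: there
`f̂ = |S|⁻¹ ∑_{i ∈ S} y(W i)`, and each summand times the indicator of the cell is a product of
functions of single coordinates, so by independence it has expectation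
`T c^{|S|-1} (1-c)^{n-|S|}` with `c = P(W ∈ s)` and `T = E[y(W); W ∈ s]`. The binomial theorem
sums this to `T / c * (1 - (1-c)^n)`. Integrating out the uniform coordinate gives `c = c_n(x)`
and, as `E ε = 0`, `T = T_{k_n}(f, x)`.
-/

open MeasureTheory ProbabilityTheory Real Filter
open Finset

noncomputable section HitMean

variable {ι γ : Type*} {s : Set γ} {y : γ → ℝ}

def hitMean [Fintype ι] (s : Set γ) (y : γ → ℝ) (v : ι → γ) : ℝ :=
  (∑ i, s.indicator y (v i)) / ∑ i, s.indicator 1 (v i)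

theorem hitMean_eq_ite [Fintype ι] (s : Set γ) (y : γ → ℝ) (v : ι → γ) :
    hitMean s y v = if 0 < ∑ i, s.indicator (1 : γ → ℝ) (v i)
      then (∑ i, s.indicator y (v i)) / ∑ i, s.indicator 1 (v i) else 0 := by
  split_ifs with hpos
  · rfl
  · rw [hitMean, le_antisymm (not_lt.1 hpos) (Finset.sum_nonneg fun i _ =>
      Set.indicator_nonneg (fun _ _ => zero_le_one) _), div_zero]

theorem sum_card_inv_mul_sum_pow [Fintype ι] {c T : ℝ} (hT : c = 0 → T = 0) :
    ∑ S : Finset ι, (#S : ℝ)⁻¹ * ∑ _i ∈ S, T * (c ^ (#S - 1) * (1 - c) ^ (Fintype.card ι - #S))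
      = T / c * (1 - (1 - c) ^ Fintype.card ι) := by
  classical
  rcases eq_or_ne c 0 with rfl | hc
  · simp [hT rfl]
  have hterm : ∀ S : Finset ι,
      (#S : ℝ)⁻¹ * ∑ _i ∈ S, T * (c ^ (#S - 1) * (1 - c) ^ (Fintype.card ι - #S))
        = T / c * (c ^ #S * (1 - c) ^ (Fintype.card ι - #S)
          - if S = ∅ then (1 - c) ^ Fintype.card ι else 0) := by
    intro S
    rcases S.eq_empty_or_nonempty with rfl | hS
    · simp
    rw [sum_const, nsmul_eq_mul, if_neg hS.ne_empty, sub_zero, ← mul_assoc,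
      inv_mul_cancel₀ (by exact_mod_cast hS.card_pos.ne'), one_mul,
      ← Nat.sub_add_cancel hS.card_pos, pow_succ, Nat.add_sub_cancel]
    field_simp
  rw [sum_congr rfl fun S _ => hterm S, ← mul_sum, sum_sub_distrib,
    Fintype.sum_pow_mul_eq_add_pow, sum_ite_eq', if_pos (mem_univ _), add_sub_cancel, one_pow]

section CellFactor

variable [DecidableEq ι]

def cellFactor (s : Set γ) (y : γ → ℝ) (S : Finset ι) (i j : ι) : γ → ℝ :=
  if j = i then s.indicator y else (if j ∈ S then s else sᶜ).indicator 1

open scoped Classical in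
theorem prod_cellFactor [Fintype ι] {S : Finset ι} {i : ι} (hi : i ∈ S) (v : ι → γ) :
    ∏ j, cellFactor s y S i j (v j) = if ∀ j, (v j ∈ s ↔ j ∈ S) then y (v i) else 0 := by
  have hfactor : ∀ j, cellFactor s y S i j (v j)
      = (if j = i then y (v j) else 1) * (if (v j ∈ s ↔ j ∈ S) then 1 else 0) := by
    intro j
    by_cases hji : j = i
    · subst hji
      by_cases hv : v j ∈ s <;> simp [cellFactor, hv, hi]
    · by_cases hj : j ∈ S <;> by_cases hv : v j ∈ s <;> simp [cellFactor, hji, hj, hv]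
  rw [Fintype.prod_congr _ _ hfactor, prod_mul_distrib, Fintype.prod_ite_eq',
    Fintype.prod_boole, mul_ite, mul_one, mul_zero]

theorem hitMean_eq_sum_cells [Fintype ι] (s : Set γ) (y : γ → ℝ) (v : ι → γ) :
    hitMean s y v = ∑ S : Finset ι, (#S : ℝ)⁻¹ * ∑ i ∈ S, ∏ j, cellFactor s y S i j (v j) := by
  classical
  set S₀ : Finset ι := univ.filter (v · ∈ s)
  have hS₀ : ∀ S : Finset ι, (∀ j, (v j ∈ s ↔ j ∈ S)) ↔ S = S₀ := by
    intro S
    simp [S₀, Finset.ext_iff, Iff.comm]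
  rw [Finset.sum_eq_single S₀]
  · rw [Finset.sum_congr rfl fun i hi => by rw [prod_cellFactor hi, if_pos ((hS₀ S₀).2 rfl)],
      hitMean, Finset.sum_indicator_eq_sum_filter, Finset.sum_indicator_eq_sum_filter]
    simp [S₀, div_eq_inv_mul]
  · intro S _ hS
    rw [Finset.sum_congr rfl fun i hi => by rw [prod_cellFactor hi, if_neg (mt (hS₀ S).1 hS)]]
    simp
  · simp

variable [MeasurableSpace γ] {ν : Measure γ}

theorem integrable_cellFactor [IsFiniteMeasure ν] (hs : MeasurableSet s)
    (hy : IntegrableOn y s ν) (S : Finset ι) (i j : ι) : Integrable (cellFactor s y S i j) ν := by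
  unfold cellFactor
  split_ifs
  exacts [hy.integrable_indicator hs, (integrable_const 1).indicator hs,
    (integrable_const 1).indicator hs.compl]

theorem integral_cellFactor [IsProbabilityMeasure ν] (hs : MeasurableSet s) (S : Finset ι)
    (i j : ι) :
    ∫ w, cellFactor s y S i j w ∂ν
      = if j = i then ∫ w in s, y w ∂ν else if j ∈ S then ν.real s else 1 - ν.real s := by
  unfold cellFactor
  split_ifs
  exacts [integral_indicator hs, integral_indicator_one hs,
    (integral_indicator_one hs.compl).trans (probReal_compl_eq_one_sub hs)]

theorem integral_prod_cellFactor [Fintype ι] [IsProbabilityMeasure ν] (hs : MeasurableSet s)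
    {S : Finset ι} {i : ι} (hi : i ∈ S) :
    ∫ v, ∏ j, cellFactor s y S i j (v j) ∂(Measure.pi fun _ : ι => ν)
      = (∫ w in s, y w ∂ν) * (ν.real s ^ (#S - 1) * (1 - ν.real s) ^ (Fintype.card ι - #S)) := by
  rw [integral_fintype_prod_eq_prod, Fintype.prod_congr _ _ fun j => integral_cellFactor hs S i j,
    ← mul_prod_erase _ _ (mem_univ i), if_pos rfl,
    prod_congr rfl fun j hj => if_neg (ne_of_mem_erase hj), prod_ite, prod_const, prod_const]
  congr 3
  · rw [← card_erase_of_mem hi]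
    congr 1
    ext j
    simp
  · rw [← card_compl]
    congr 1
    ext j
    simp only [mem_filter, mem_erase, mem_univ, mem_compl]
    grind

end CellFactor

variable [MeasurableSpace γ] {ν : Measure γ}

theorem integral_hitMean_pi [Fintype ι] [IsProbabilityMeasure ν] (hs : MeasurableSet s)
    (hy : IntegrableOn y s ν) :
    ∫ v, hitMean s y v ∂(Measure.pi fun _ : ι => ν)
      = (∫ w in s, y w ∂ν) / ν.real s * (1 - (1 - ν.real s) ^ Fintype.card ι) := by
  classical
  have hcell : ∀ S i, Integrable (fun v : ι → γ => ∏ j, cellFactor s y S i j (v j))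
      (Measure.pi fun _ => ν) := fun S i =>
    Integrable.fintype_prod fun j => integrable_cellFactor hs hy S i j
  simp_rw [hitMean_eq_sum_cells]
  rw [integral_finsetSum _ fun S _ => (integrable_finsetSum S fun i _ => hcell S i).const_mul _]
  simp_rw [integral_const_mul]
  rw [sum_congr rfl fun S _ => by
    rw [integral_finsetSum _ fun i _ => hcell S i,
      sum_congr rfl fun i hi => integral_prod_cellFactor hs hi]]
  exact sum_card_inv_mul_sum_pow fun hc =>
    setIntegral_measure_zero _ ((measureReal_eq_zero_iff).1 hc)

theorem measurable_hitMean [Fintype ι] (hs : MeasurableSet s) (hy : Measurable y) :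
    Measurable (hitMean (ι := ι) s y) :=
  (Finset.measurable_sum _ fun i _ => (hy.indicator hs).comp (measurable_pi_apply i)).div
    (Finset.measurable_sum _ fun i _ =>
      (measurable_const.indicator hs).comp (measurable_pi_apply i))

end HitMean

theorem integral_withDensity_ofReal {α : Type*} [MeasurableSpace α] {μ : Measure α} {p : α → ℝ}
    (hp0 : ∀ z, 0 ≤ p z) (hpm : Measurable p) (g : α → ℝ) :
    ∫ z, g z ∂(μ.withDensity fun z => ENNReal.ofReal (p z)) = ∫ z, p z * g z ∂μ := by
  rw [integral_withDensity_eq_integral_toReal_smul hpm.ennreal_ofReal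
    (ae_of_all _ fun _ => ENNReal.ofReal_lt_top)]
  simp_rw [ENNReal.toReal_ofReal (hp0 _), smul_eq_mul]

theorem measureReal_restrict_Icc_Iic {t : ℝ} (ht : t ∈ Set.Icc 0 1) :
    (volume.restrict (Set.Icc (0 : ℝ) 1)).real (Set.Iic t) = t := by
  have hinter : Set.Iic t ∩ Set.Icc 0 1 = Set.Icc 0 t :=
    Set.ext fun _ => ⟨fun h => ⟨h.2.1, h.1⟩, fun h => ⟨h.2, h.1, h.2.trans ht.2⟩⟩
  rw [measureReal_restrict_apply measurableSet_Iic, hinter, Real.volume_real_Icc_of_le ht.1,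
    sub_zero]

theorem measurableSet_snd_fst_le {α β : Type*} [MeasurableSpace α] [MeasurableSpace β]
    {κ : α → ℝ} (hκ : Measurable κ) : MeasurableSet {w : α × ℝ × β | w.2.1 ≤ κ w.1} :=
  measurableSet_le measurable_snd.fst (hκ.comp measurable_fst)

theorem setIntegral_thinning {α β : Type*} [MeasurableSpace α] [MeasurableSpace β]
    {μ : Measure α} {μU : Measure ℝ} {ρ : Measure β} [SFinite μ] [IsProbabilityMeasure μU]
    [SFinite ρ] {κ : α → ℝ} (hκ : Measurable κ) (hcdf : ∀ z, μU.real (Set.Iic (κ z)) = κ z)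
    {F : α × β → ℝ} (hF : Integrable F (μ.prod ρ)) :
    ∫ w in {w | w.2.1 ≤ κ w.1}, F (w.1, w.2.2) ∂(μ.prod (μU.prod ρ))
      = ∫ z, κ z * ∫ e, F (z, e) ∂ρ ∂μ := by
  have hs : MeasurableSet {w : α × ℝ × β | w.2.1 ≤ κ w.1} := measurableSet_snd_fst_le hκ
  have hint : Integrable (fun w : α × ℝ × β => F (w.1, w.2.2)) (μ.prod (μU.prod ρ)) :=
    ((MeasurePreserving.id μ).prod measurePreserving_snd).integrable_comp_of_integrable hF
  rw [← integral_indicator hs, integral_prod _ (hint.indicator hs)]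
  refine integral_congr_ae (ae_of_all _ fun z => ?_)
  have hslice : ∀ q : ℝ × β, {w : α × ℝ × β | w.2.1 ≤ κ w.1}.indicator (fun w => F (w.1, w.2.2))
      (z, q) = (Set.Iic (κ z)).indicator 1 q.1 * F (z, q.2) := by
    intro q
    by_cases h : q.1 ≤ κ z <;> simp [Set.indicator, h]
  simp_rw [hslice]
  rw [integral_prod_mul (f := (Set.Iic (κ z)).indicator 1) (g := fun e => F (z, e)),
    integral_indicator_one measurableSet_Iic, hcdf]

theorem measureReal_thinning {α β : Type*} [MeasurableSpace α] [MeasurableSpace β]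
    {μ : Measure α} {μU : Measure ℝ} {ρ : Measure β} [IsFiniteMeasure μ]
    [IsProbabilityMeasure μU] [IsProbabilityMeasure ρ] {κ : α → ℝ} (hκ : Measurable κ)
    (hcdf : ∀ z, μU.real (Set.Iic (κ z)) = κ z) :
    (μ.prod (μU.prod ρ)).real {w | w.2.1 ≤ κ w.1} = ∫ z, κ z ∂μ := by
  have h := setIntegral_thinning (F := fun _ : α × β => (1 : ℝ)) (μ := μ) (ρ := ρ) hκ hcdf
    (integrable_const 1)
  simpa only [integral_const, measureReal_restrict_apply_univ, probReal_univ, smul_eq_mul,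
    mul_one] using h

theorem setIntegral_thinning_add_centered {α : Type*} [MeasurableSpace α] {μ : Measure α}
    {μU ρ : Measure ℝ} [IsFiniteMeasure μ] [IsProbabilityMeasure μU] [IsProbabilityMeasure ρ]
    {κ : α → ℝ} (hκ : Measurable κ) (hcdf : ∀ z, μU.real (Set.Iic (κ z)) = κ z) {g : α → ℝ}
    (hg : Integrable g μ) (hρ : Integrable (fun e : ℝ => e) ρ) (hρ0 : ∫ e, e ∂ρ = 0) :
    ∫ w in {w | w.2.1 ≤ κ w.1}, g w.1 + w.2.2 ∂(μ.prod (μU.prod ρ)) = ∫ z, κ z * g z ∂μ := by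
  rw [setIntegral_thinning (F := fun q : α × ℝ => g q.1 + q.2) hκ hcdf
    ((hg.comp_fst ρ).add (hρ.comp_snd μ))]
  simp_rw [integral_add (integrable_const _) hρ, hρ0, integral_const, probReal_univ, one_smul,
    add_zero]

theorem integral_hitMean_thinning {ι α : Type*} [Fintype ι] [MeasurableSpace α]
    {μ : Measure α} {μU ρ : Measure ℝ} [IsProbabilityMeasure μ] [IsProbabilityMeasure μU]
    [IsProbabilityMeasure ρ] {κ : α → ℝ} (hκ : Measurable κ)
    (hcdf : ∀ z, μU.real (Set.Iic (κ z)) = κ z) {g : α → ℝ} (hg : Integrable g μ)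
    (hρ : Integrable (fun e : ℝ => e) ρ) (hρ0 : ∫ e, e ∂ρ = 0) :
    ∫ v, hitMean {w | w.2.1 ≤ κ w.1} (fun w => g w.1 + w.2.2) v
        ∂(Measure.pi fun _ : ι => μ.prod (μU.prod ρ))
      = (∫ z, κ z * g z ∂μ) / (∫ z, κ z ∂μ) * (1 - (1 - ∫ z, κ z ∂μ) ^ Fintype.card ι) := by
  have hy : Integrable (fun w : α × ℝ × ℝ => g w.1 + w.2.2) (μ.prod (μU.prod ρ)) :=
    (hg.comp_fst _).add ((hρ.comp_snd μU).comp_snd μ)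
  rw [integral_hitMean_pi (measurableSet_snd_fst_le hκ) hy.integrableOn,
    measureReal_thinning hκ hcdf, setIntegral_thinning_add_centered hκ hcdf hg hρ hρ0]

theorem stmt_11_general
    {n d : ℕ} {Ω : Type} [MeasurableSpace Ω]
    (P : Measure Ω) [IsProbabilityMeasure P]
    (X : Fin n → Ω → EuclideanSpace ℝ (Fin d)) (U : Fin n → Ω → ℝ) (ε : Fin n → Ω → ℝ)
    (hX : ∀ i, Measurable (X i)) (hU : ∀ i, Measurable (U i))
    (hε : ∀ i, Measurable (ε i))
    (p : EuclideanSpace ℝ (Fin d) → ℝ)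
    (hp0 : ∀ z, 0 ≤ p z) (hpm : Measurable p)
    (kn : EuclideanSpace ℝ (Fin d) → EuclideanSpace ℝ (Fin d) → ℝ)
    (hk01 : ∀ u v, kn u v ∈ Set.Icc (0 : ℝ) 1)
    (hkm : Measurable (Function.uncurry kn))
    (x : EuclideanSpace ℝ (Fin d))
    (μX : Measure (EuclideanSpace ℝ (Fin d))) (hμXP : IsProbabilityMeasure μX)
    (hμX : μX = volume.withDensity fun z => ENNReal.ofReal (p z))
    (μU : Measure ℝ) (hμUP : IsProbabilityMeasure μU)
    (hμU : μU = volume.restrict (Set.Icc (0 : ℝ) 1))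
    (με : Measure ℝ) (hμεP : IsProbabilityMeasure με)
    (hlaw : Measure.map (fun ω => fun i : Fin n => (X i ω, U i ω, ε i ω)) P
      = Measure.pi fun _ : Fin n => μX.prod (μU.prod με))
    (A : Fin n → Ω → ℝ)
    (hA : ∀ i ω, A i ω = if U i ω ≤ kn x (X i ω) then 1 else 0)
    (cnx : ℝ)
    (hc : cnx = ∫ z, kn x z * p z)
    (hεint : Integrable (fun t : ℝ => t) με) (hεmean : ∫ t : ℝ, t ∂με = 0)
    (f : EuclideanSpace ℝ (Fin d) → ℝ) (B : ℝ)
    (hfm : Measurable f) (hfB : ∀ z, |f z| ≤ B)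
    (Tfx bnfx : ℝ)
    (hT : Tfx = ∫ z, f z * (kn x z * p z)) (hb : bnfx = Tfx / cnx)
    (Y : Fin n → Ω → ℝ) (hY : ∀ i ω, Y i ω = f (X i ω) + ε i ω)
    (fhat : Ω → ℝ)
    (hfhat : ∀ ω, fhat ω =
      if 0 < ∑ i, A i ω then (∑ i, Y i ω * A i ω) / (∑ i, A i ω) else 0)
    :
    ∫ ω, fhat ω ∂P = bnfx * (1 - (1 - cnx) ^ n) := by
  set W : Ω → Fin n → EuclideanSpace ℝ (Fin d) × ℝ × ℝ := fun ω i => (X i ω, U i ω, ε i ω)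
  set s : Set (EuclideanSpace ℝ (Fin d) × ℝ × ℝ) := {w | w.2.1 ≤ kn x w.1}
  set y : EuclideanSpace ℝ (Fin d) × ℝ × ℝ → ℝ := fun w => f w.1 + w.2.2
  have hkx : Measurable (kn x) := hkm.comp measurable_prodMk_left
  have hcdf : ∀ z, μU.real (Set.Iic (kn x z)) = kn x z := fun z => by
    rw [hμU, measureReal_restrict_Icc_Iic (hk01 x z)]
  have hfint : Integrable f μX := Integrable.of_bound hfm.aestronglyMeasurable B (ae_of_all _ hfB)
  have hc' : ∫ z, kn x z ∂μX = cnx := by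
    rw [hμX, integral_withDensity_ofReal hp0 hpm, hc]
    simp_rw [mul_comm]
  have hT' : ∫ z, kn x z * f z ∂μX = Tfx := by
    rw [hμX, integral_withDensity_ofReal hp0 hpm, hT]
    congr 1 with z
    ring
  have hym : Measurable y := (hfm.comp measurable_fst).add measurable_snd.snd
  have hfhatW : fhat = hitMean s y ∘ W := by
    funext ω
    have hAs : ∀ i, A i ω = s.indicator 1 (W ω i) := fun i => by
      rw [hA]; simp [Set.indicator, s, W]
    have hYs : ∀ i, Y i ω * A i ω = s.indicator y (W ω i) := fun i => by
      rw [hAs, hY]; simp [Set.indicator, s, y, W]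
    rw [hfhat ω, Function.comp_apply, hitMean_eq_ite]
    simp_rw [hYs, hAs]
  calc ∫ ω, fhat ω ∂P = ∫ v, hitMean s y v ∂(P.map W) := by
        rw [hfhatW]
        exact (integral_map (measurable_pi_lambda _ fun i =>
          (hX i).prodMk ((hU i).prodMk (hε i))).aemeasurable
          (measurable_hitMean (measurableSet_snd_fst_le hkx) hym).aestronglyMeasurable).symm
    _ = bnfx * (1 - (1 - cnx) ^ n) := by
        rw [hlaw, integral_hitMean_thinning hkx hcdf hfint hεint hεmean, hc', hT',
          Fintype.card_fin, hb]

/-- (Expectation of GNW.) For bounded measurable `f` and centered noise,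
`E[f̂(x)] = b_n(f,x) (1 − (1 − c_n(x))^n)`. -/
theorem stmt_11
    {n d : ℕ} {Ω : Type} [MeasurableSpace Ω]
    (P : Measure Ω) [IsProbabilityMeasure P]
    (X : Fin n → Ω → EuclideanSpace ℝ (Fin d)) (U : Fin n → Ω → ℝ) (ε : Fin n → Ω → ℝ)
    (hX : ∀ i, Measurable (X i)) (hU : ∀ i, Measurable (U i))
    (hε : ∀ i, Measurable (ε i))
    (p : EuclideanSpace ℝ (Fin d) → ℝ)
    (hp0 : ∀ z, 0 ≤ p z) (hpm : Measurable p) (hp1 : ∫ z, p z = 1)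
    (kn : EuclideanSpace ℝ (Fin d) → EuclideanSpace ℝ (Fin d) → ℝ)
    (hk01 : ∀ u v, kn u v ∈ Set.Icc (0 : ℝ) 1)
    (hkm : Measurable (Function.uncurry kn))
    (x : EuclideanSpace ℝ (Fin d))
    (μX : Measure (EuclideanSpace ℝ (Fin d))) (hμXP : IsProbabilityMeasure μX)
    (hμX : μX = volume.withDensity fun z => ENNReal.ofReal (p z))
    (μU : Measure ℝ) (hμUP : IsProbabilityMeasure μU)
    (hμU : μU = volume.restrict (Set.Icc (0 : ℝ) 1))
    (με : Measure ℝ) (hμεP : IsProbabilityMeasure με)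
    (hlaw : Measure.map (fun ω => fun i : Fin n => (X i ω, U i ω, ε i ω)) P
      = Measure.pi fun _ : Fin n => μX.prod (μU.prod με))
    (A : Fin n → Ω → ℝ)
    (hA : ∀ i ω, A i ω = if U i ω ≤ kn x (X i ω) then 1 else 0)
    (cnx dnx : ℝ)
    (hc : cnx = ∫ z, kn x z * p z) (hcpos : 0 < cnx)
    (hd : dnx = n * cnx)
    (hεint : Integrable (fun t : ℝ => t) με) (hεmean : ∫ t : ℝ, t ∂με = 0)
    (f : EuclideanSpace ℝ (Fin d) → ℝ) (B : ℝ)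
    (hfm : Measurable f) (hfB : ∀ z, |f z| ≤ B)
    (Tfx bnfx : ℝ)
    (hT : Tfx = ∫ z, f z * (kn x z * p z)) (hb : bnfx = Tfx / cnx)
    (Y : Fin n → Ω → ℝ) (hY : ∀ i ω, Y i ω = f (X i ω) + ε i ω)
    (fhat : Ω → ℝ)
    (hfhat : ∀ ω, fhat ω =
      if 0 < ∑ i, A i ω then (∑ i, Y i ω * A i ω) / (∑ i, A i ω) else 0)
    :
    ∫ ω, fhat ω ∂P = bnfx * (1 - (1 - cnx) ^ n) :=
  stmt_11_general P X U ε hX hU hε p hp0 hpm kn hk01 hkm x μX hμXP hμX μU hμUP hμU με hμεP hlaw A hA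
    cnx hc hεint hεmean f B hfm hfB Tfx bnfx hT hb Y hY fhat hfhat
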